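/- Under the standing hypotheses on g, if k is a closed element of D with k ≤ g(⊤), then ◆_g(k) = sInf { eA a | a ∈ A, ◆_g(k) ≤ eA a }, and ◆_g(k) is a closed element of C. (Lemma 4.10(2).) -/

import Mathlib

/-!
A completely meet-prime `m` with `k ≤ g m` is open, hence the up-directed join of the `eA a ≤ m`.
As `g` is open Esakia, `g m` is then the up-directed join of the open elements `g (eA a)`, and
compactness puts the closed element `k` below one of them. So each such `m` lies above some `eA a`
with `k ≤ g (eA a)`, while meet-perfectness of `C` gives `◆_g k ≤ eA a` for every such `a`: thus
`◆_g k` is the meet of `{eA a | k ≤ g (eA a)}`, a closed element.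
-/

/-- An element is completely join-prime. -/
def CJPrime {C : Type*} [CompleteLattice C] (j : C) : Prop :=
  j ≠ ⊥ ∧ ∀ S : Set C, j ≤ sSup S → ∃ s ∈ S, j ≤ s

/-- An element is completely meet-prime. -/
def CMPrime {C : Type*} [CompleteLattice C] (m : C) : Prop :=
  m ≠ ⊤ ∧ ∀ S : Set C, sInf S ≤ m → ∃ s ∈ S, s ≤ m

/-- ◇_f(u) = ⋁ { f j | j completely join-prime, j ≤ u }. -/
def diam {C D : Type*} [CompleteLattice C] [CompleteLattice D]
    (f : C → D) (u : C) : D :=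
  sSup (f '' {j | CJPrime j ∧ j ≤ u})

/-- ■_f(v) = ⋁ { j | j completely join-prime, f j ≤ v }. -/
def bsq {C D : Type*} [CompleteLattice C] [CompleteLattice D]
    (f : C → D) (v : D) : C :=
  sSup {j | CJPrime j ∧ f j ≤ v}

/-- □_g(u) = ⋀ { g m | m completely meet-prime, u ≤ m }. -/
def boxg {C D : Type*} [CompleteLattice C] [CompleteLattice D]
    (g : C → D) (u : C) : D :=
  sInf (g '' {m | CMPrime m ∧ u ≤ m})

/-- ◆_g(v) = ⋀ { m | m completely meet-prime, v ≤ g m }. -/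
def bdiam {C D : Type*} [CompleteLattice C] [CompleteLattice D]
    (g : C → D) (v : D) : C :=
  sInf {m | CMPrime m ∧ v ≤ g m}

/-- Every element is the sup of the completely join-primes below it. -/
def JoinPerfect (C : Type*) [CompleteLattice C] : Prop :=
  ∀ u : C, u = sSup {j | CJPrime j ∧ j ≤ u}

/-- Every element is the inf of the completely meet-primes above it. -/
def MeetPerfect (C : Type*) [CompleteLattice C] : Prop :=
  ∀ u : C, u = sInf {m | CMPrime m ∧ u ≤ m}

/-- `(C, e)` is a canonical extension of the bounded distributive lattice `A`. -/
structure IsCanonicalExtension {A C : Type*} [DistribLattice A] [BoundedOrder A]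
    [CompleteLattice C] (e : A → C) : Prop where
  injective : Function.Injective e
  map_bot : e ⊥ = ⊥
  map_top : e ⊤ = ⊤
  map_inf : ∀ a b : A, e (a ⊓ b) = e a ⊓ e b
  map_sup : ∀ a b : A, e (a ⊔ b) = e a ⊔ e b
  dense_joinOfMeets : ∀ u : C, ∃ 𝒮 : Set (Set A),
      u = sSup ((fun S => sInf (e '' S)) '' 𝒮)
  dense_meetOfJoins : ∀ u : C, ∃ 𝒮 : Set (Set A),
      u = sInf ((fun S => sSup (e '' S)) '' 𝒮)
  compact : ∀ S T : Set A, sInf (e '' S) ≤ sSup (e '' T) →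
      ∃ F : Finset A, ↑F ⊆ S ∧ ∃ G : Finset A, ↑G ⊆ T ∧ F.inf id ≤ G.sup id

/-- Closed elements of the canonical extension: meets of subsets of `e(A)`. -/
def ClosedElem {A C : Type*} [CompleteLattice C] (e : A → C) (x : C) : Prop :=
  ∃ S : Set A, x = sInf (e '' S)

/-- Open elements of the canonical extension: joins of subsets of `e(A)`. -/
def OpenElem {A C : Type*} [CompleteLattice C] (e : A → C) (x : C) : Prop :=
  ∃ S : Set A, x = sSup (e '' S)

/-- Nonempty downward-directed family. -/
def DownDir {C : Type*} [Preorder C] (𝒞 : Set C) : Prop :=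
  𝒞.Nonempty ∧ ∀ x ∈ 𝒞, ∀ y ∈ 𝒞, ∃ z ∈ 𝒞, z ≤ x ∧ z ≤ y

/-- Nonempty upward-directed family. -/
def UpDir {C : Type*} [Preorder C] (𝒪 : Set C) : Prop :=
  𝒪.Nonempty ∧ ∀ x ∈ 𝒪, ∀ y ∈ 𝒪, ∃ z ∈ 𝒪, x ≤ z ∧ y ≤ z

/-- `h` preserves down-directed meets of closed elements. -/
def ClosedEsakia {A C D : Type*} [CompleteLattice C] [CompleteLattice D]
    (e : A → C) (h : C → D) : Prop :=
  ∀ 𝒞 : Set C, DownDir 𝒞 → (∀ c ∈ 𝒞, ClosedElem e c) →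
    h (sInf 𝒞) = sInf (h '' 𝒞)

/-- `h` preserves up-directed joins of open elements. -/
def OpenEsakia {A C D : Type*} [CompleteLattice C] [CompleteLattice D]
    (e : A → C) (h : C → D) : Prop :=
  ∀ 𝒪 : Set C, UpDir 𝒪 → (∀ o ∈ 𝒪, OpenElem e o) →
    h (sSup 𝒪) = sSup (h '' 𝒪)

open Set

theorem UpDir.image {C D : Type*} [Preorder C] [Preorder D] {f : C → D} (hf : Monotone f)
    {𝒪 : Set C} (h𝒪 : UpDir 𝒪) : UpDir (f '' 𝒪) := by
  refine ⟨h𝒪.1.image f, ?_⟩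
  rintro _ ⟨x, hx, rfl⟩ _ ⟨y, hy, rfl⟩
  obtain ⟨z, hz, hxz, hyz⟩ := h𝒪.2 x hx y hy
  exact ⟨f z, mem_image_of_mem f hz, hf hxz, hf hyz⟩

theorem OpenElem.sSup_image_setOf_le {A C : Type*} [CompleteLattice C] {e : A → C} {x : C}
    (hx : OpenElem e x) : sSup (e '' {a | e a ≤ x}) = x := by
  obtain ⟨S, rfl⟩ := hx
  exact le_antisymm (sSup_le <| by rintro _ ⟨a, ha, rfl⟩; exact ha)
    (sSup_le_sSup <| image_mono fun a ha => le_sSup (mem_image_of_mem e ha))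

theorem ClosedElem.sInf_image_setOf_le {A C : Type*} [CompleteLattice C] {e : A → C} {x : C}
    (hx : ClosedElem e x) : sInf (e '' {a | x ≤ e a}) = x := by
  obtain ⟨S, rfl⟩ := hx
  exact le_antisymm (sInf_le_sInf <| image_mono fun a ha => sInf_le (mem_image_of_mem e ha))
    (le_sInf <| by rintro _ ⟨a, ha, rfl⟩; exact ha)

theorem bdiam_le_of_le_map {C D : Type*} [CompleteLattice C] [CompleteLattice D]
    (hC : MeetPerfect C) {g : C → D} (hg : Monotone g) {v : D} {u : C} (hvu : v ≤ g u) :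
    bdiam g v ≤ u := by
  rw [hC u]
  exact sInf_le_sInf fun m hm => ⟨hm.1, hvu.trans (hg hm.2)⟩

namespace IsCanonicalExtension

variable {A C : Type*} [DistribLattice A] [BoundedOrder A] [CompleteLattice C] {e : A → C}

theorem monotone (he : IsCanonicalExtension e) : Monotone e := fun a b hab => by
  simpa [sup_eq_right.mpr hab] using (he.map_sup a b).ge

theorem map_finset_sup (he : IsCanonicalExtension e) {ι : Type*} (s : Finset ι) (f : ι → A) :
    e (s.sup f) = s.sup (e ∘ f) :=
  Finset.apply_sup_eq_sup_comp e he.map_sup he.map_bot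

theorem map_finset_inf (he : IsCanonicalExtension e) {ι : Type*} (s : Finset ι) (f : ι → A) :
    e (s.inf f) = s.inf (e ∘ f) :=
  Finset.apply_inf_eq_inf_comp e he.map_inf he.map_top

theorem openElem_of_cmPrime (he : IsCanonicalExtension e) {m : C} (hm : CMPrime m) :
    OpenElem e m := by
  obtain ⟨𝒮, h𝒮⟩ := he.dense_meetOfJoins m
  obtain ⟨_, ⟨S, hS, rfl⟩, hSm⟩ := hm.2 _ h𝒮.ge
  exact ⟨S, le_antisymm (h𝒮.le.trans (sInf_le ⟨S, hS, rfl⟩)) hSm⟩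

theorem upDir_image_setOf_le (he : IsCanonicalExtension e) (x : C) :
    UpDir (e '' {a | e a ≤ x}) := by
  refine ⟨⟨e ⊥, ⊥, by simp [he.map_bot], rfl⟩, ?_⟩
  rintro _ ⟨a, ha, rfl⟩ _ ⟨b, hb, rfl⟩
  refine ⟨e (a ⊔ b), ⟨a ⊔ b, ?_, rfl⟩, he.monotone le_sup_left, he.monotone le_sup_right⟩
  simpa [he.map_sup] using And.intro ha hb

theorem exists_le_of_le_sSup (he : IsCanonicalExtension e) {k : C} (hk : ClosedElem e k)
    {𝒪 : Set C} (h𝒪 : UpDir 𝒪) (hopen : ∀ o ∈ 𝒪, OpenElem e o) (hle : k ≤ sSup 𝒪) :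
    ∃ o ∈ 𝒪, k ≤ o := by
  classical
  obtain ⟨K, rfl⟩ := hk
  set V : Set A := {b | ∃ o ∈ 𝒪, e b ≤ o}
  have hV : sSup 𝒪 ≤ sSup (e '' V) := sSup_le fun o ho => by
    obtain ⟨S, rfl⟩ := hopen o ho
    exact sSup_le_sSup (image_mono fun b hb => ⟨_, ho, le_sSup (mem_image_of_mem e hb)⟩)
  obtain ⟨F, hFK, G, hGV, hFG⟩ := he.compact K V (hle.trans hV)
  have hGV' : ∀ b ∈ G, ∃ o ∈ 𝒪, e b ≤ o := fun b hb => hGV hb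
  obtain ⟨o, ho, hGo⟩ := Finset.sup_le_of_le_directed 𝒪 h𝒪.1
    h𝒪.2 (G.image e) (by simpa using hGV')
  refine ⟨o, ho, ?_⟩
  calc sInf (e '' K) ≤ e (F.inf id) := by
        rw [he.map_finset_inf]
        exact Finset.le_inf fun b hb => sInf_le (mem_image_of_mem e (hFK hb))
    _ ≤ e (G.sup id) := he.monotone hFG
    _ = (G.image e).sup id := by rw [Finset.sup_image, he.map_finset_sup]; rfl
    _ ≤ o := hGo

end IsCanonicalExtension

section Esakia

variable {A B C D : Type*} [DistribLattice A] [BoundedOrder A] [DistribLattice B]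
  [BoundedOrder B] [CompleteLattice C] [CompleteLattice D] {eA : A → C} {eB : B → D}
  {g : C → D}

theorem exists_le_and_le_map_of_cmPrime (hceA : IsCanonicalExtension eA)
    (hceB : IsCanonicalExtension eB) (hg : Monotone g) (hgoE : OpenEsakia eA g)
    (hop : ∀ a : A, OpenElem eB (g (eA a))) {k : D} (hk : ClosedElem eB k) {m : C}
    (hm : CMPrime m) (hkm : k ≤ g m) : ∃ a : A, eA a ≤ m ∧ k ≤ g (eA a) := by
  have hgm : g m = sSup (g '' (eA '' {a | eA a ≤ m})) := by
    conv_lhs => rw [← (hceA.openElem_of_cmPrime hm).sSup_image_setOf_le]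
    exact hgoE _ (hceA.upDir_image_setOf_le m) (by rintro _ ⟨a, -, rfl⟩; exact ⟨{a}, by simp⟩)
  obtain ⟨_, ⟨_, ⟨a, ham, rfl⟩, rfl⟩, hka⟩ := hceB.exists_le_of_le_sSup hk
    ((hceA.upDir_image_setOf_le m).image hg) (by rintro _ ⟨_, ⟨a, -, rfl⟩, rfl⟩; exact hop a)
    (hgm ▸ hkm)
  exact ⟨a, ham, hka⟩

theorem bdiam_eq_sInf_image_setOf_le_map (hceA : IsCanonicalExtension eA)
    (hceB : IsCanonicalExtension eB) (hCm : MeetPerfect C) (hg : Monotone g)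
    (hgoE : OpenEsakia eA g) (hop : ∀ a : A, OpenElem eB (g (eA a))) {k : D}
    (hk : ClosedElem eB k) : bdiam g k = sInf (eA '' {a | k ≤ g (eA a)}) := by
  refine le_antisymm (le_sInf ?_) (le_sInf fun m hm => ?_)
  · rintro _ ⟨a, ha, rfl⟩
    exact bdiam_le_of_le_map hCm hg ha
  · obtain ⟨a, ham, hka⟩ := exists_le_and_le_map_of_cmPrime hceA hceB hg hgoE hop hk hm.1 hm.2
    exact (sInf_le (mem_image_of_mem eA hka)).trans ham

end Esakia

theorem stmt8_general {A B C D : Type*} [DistribLattice A] [BoundedOrder A]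
    [DistribLattice B] [BoundedOrder B] [CompleteLattice C] [CompleteLattice D]
    (eA : A → C) (eB : B → D)
    (hceA : IsCanonicalExtension eA) (hceB : IsCanonicalExtension eB)
    (hCm : MeetPerfect C)
    (g : C → D) (hg : Monotone g)
    (hgoE : OpenEsakia eA g)
    (hop : ∀ a : A, OpenElem eB (g (eA a))) :
    ∀ k : D, ClosedElem eB k → k ≤ g ⊤ →
      bdiam g k = sInf (eA '' {a : A | bdiam g k ≤ eA a}) ∧
        ClosedElem eA (bdiam g k) := by
  intro k hk _
  have hclosed : ClosedElem eA (bdiam g k) :=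
    ⟨_, bdiam_eq_sInf_image_setOf_le_map hceA hceB hCm hg hgoE hop hk⟩
  exact ⟨hclosed.sInf_image_setOf_le.symm, hclosed⟩

/-- Lemma 4.10(2): under the standing hypotheses on `g`, if `k` is closed in `D`
and `k ≤ g ⊤`, then `◆_g k` is the meet of the embedded lattice elements above
it, and `◆_g k` is closed in `C`. -/
theorem stmt8 {A B C D : Type*} [DistribLattice A] [BoundedOrder A]
    [DistribLattice B] [BoundedOrder B] [CompleteLattice C] [CompleteLattice D]
    (eA : A → C) (eB : B → D)
    (hceA : IsCanonicalExtension eA) (hceB : IsCanonicalExtension eB)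
    (hCj : JoinPerfect C) (hCm : MeetPerfect C)
    (hDj : JoinPerfect D) (hDm : MeetPerfect D)
    (g : C → D) (hg : Monotone g)
    (hgcE : ClosedEsakia eA g) (hgoE : OpenEsakia eA g)
    (hop : ∀ a : A, OpenElem eB (g (eA a)))
    (hmul : ∀ a b : A, g (eA a) ⊓ g (eA b) ≤ g (eA (a ⊓ b))) :
    ∀ k : D, ClosedElem eB k → k ≤ g ⊤ →
      bdiam g k = sInf (eA '' {a : A | bdiam g k ≤ eA a}) ∧
        ClosedElem eA (bdiam g k) :=
  stmt8_general eA eB hceA hceB hCm g hg hgoE hop
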